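/- For n ≥ 3, the independence number of the strong resolving graph of the inclusion graph on nonempty proper subsets of {1,...,n} equals 2n − 3. -/

import Mathlib

open SimpleGraph Finset

variable {V : Type*}

/-- A set of vertices is resolving if distance vectors to it distinguish vertices. -/
def IsResolving (G : SimpleGraph V) (S : Set V) : Prop :=
  ∀ u v : V, (∀ w ∈ S, G.dist u w = G.dist v w) → u = v

/-- The metric dimension: the least size of a (finite) resolving set. -/
noncomputable def metricDim (G : SimpleGraph V) : ℕ :=
  sInf {k | ∃ S : Finset V, S.card = k ∧ IsResolving G ↑S}

/-- Two vertices are mutually maximally distant. -/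
def MMD (G : SimpleGraph V) (u v : V) : Prop :=
  u ≠ v ∧ (∀ w, G.Adj u w → G.dist v w ≤ G.dist u v) ∧
    (∀ w, G.Adj v w → G.dist u w ≤ G.dist u v)

/-- The strong resolving graph: edges between mutually maximally distant vertices. -/
def strongResolvingGraph (G : SimpleGraph V) : SimpleGraph V where
  Adj u v := MMD G u v
  symm := by
    constructor
    rintro u v ⟨hne, h1, h2⟩
    refine ⟨hne.symm, ?_, ?_⟩
    · intro w hw
      rw [SimpleGraph.dist_comm (u := v) (v := u)]
      exact h2 w hw
    · intro w hw
      rw [SimpleGraph.dist_comm (u := v) (v := u)]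
      exact h1 w hw
  loopless := ⟨fun v h => h.1 rfl⟩

/-- A set strongly resolving a graph. -/
def IsStrongResolving (G : SimpleGraph V) (S : Set V) : Prop :=
  ∀ u v : V, u ≠ v → ∃ w ∈ S,
    G.dist w u = G.dist w v + G.dist v u ∨ G.dist w v = G.dist w u + G.dist u v

/-- Strong metric dimension. -/
noncomputable def sdim (G : SimpleGraph V) : ℕ :=
  sInf {k | ∃ S : Finset V, S.card = k ∧ IsStrongResolving G ↑S}

/-- An independent set of vertices. -/
def IsIndepFinset (G : SimpleGraph V) (S : Finset V) : Prop :=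
  ∀ u ∈ S, ∀ v ∈ S, u ≠ v → ¬ G.Adj u v

/-- Independence number. -/
noncomputable def indepNum (G : SimpleGraph V) : ℕ :=
  sSup {k | ∃ S : Finset V, S.card = k ∧ IsIndepFinset G S}

/-- Vertices of the inclusion graph on `{1,...,n}`: nonempty proper subsets. -/
def SubVert (n : ℕ) := {A : Finset (Fin n) // A.Nonempty ∧ A ≠ Finset.univ}

/-- The inclusion graph on nonempty proper subsets of `{1,...,n}`. -/
def inclGraph (n : ℕ) : SimpleGraph (SubVert n) where
  Adj A B := A.1 ⊂ B.1 ∨ B.1 ⊂ A.1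
  symm := ⟨fun _ _ h => h.symm⟩
  loopless := ⟨fun A h => by
    rcases h with h | h <;> exact (ssubset_irrefl A.1) h⟩

/-- Complement of a vertex of the inclusion graph. -/
def complVert {n : ℕ} (A : SubVert n) : SubVert n :=
  ⟨A.1ᶜ,
    Finset.nonempty_iff_ne_empty.mpr fun h => A.2.2 (by simpa using h),
    fun h => (Finset.nonempty_iff_ne_empty.mp A.2.1) (by simpa using h)⟩

/-- Vertices of the inclusion ideal graph of a product of chain rings:
tuples in a product of chains, excluding bottom and top. -/
def ChainVert {m : ℕ} (d : Fin m → ℕ) := {v : ∀ i, Fin (d i + 2) // v ≠ ⊥ ∧ v ≠ ⊤}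

/-- The inclusion graph on a product of chains (minus bottom and top),
modelling the inclusion ideal graph of a product of principal ideal rings. -/
def chainGraph {m : ℕ} (d : Fin m → ℕ) : SimpleGraph (ChainVert d) where
  Adj I J := I.1 < J.1 ∨ J.1 < I.1
  symm := ⟨fun _ _ h => h.symm⟩
  loopless := ⟨fun I h => by rcases h with h | h <;> exact lt_irrefl _ h⟩

/-!
In the inclusion graph two distinct vertices are at distance 1 if comparable, 3 if complementary
(they have no common neighbour) and 2 otherwise, via their meet or join. From this, `A` and `B`
are mutually maximally distant exactly when `B = Aᶜ` or `A` and `B` cross. Replacing every member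
of an independent set of the strong resolving graph by whichever of `A`, `Aᶜ` avoids a fixed point
`e` therefore gives an injective image that is a laminar family of nonempty subsets of the
`(n - 1)`-set `{e}ᶜ`. Such a family has at most `2 (n - 1) - 1` members (split along a maximal
member), and conversely a laminar family of that size on `{e}ᶜ` is independent.
-/

section Laminar

variable {α : Type*}

def IsLaminar (F : Finset (Finset α)) : Prop :=
  ∀ A ∈ F, ∀ B ∈ F, A ⊆ B ∨ B ⊆ A ∨ Disjoint A B

theorem IsLaminar.mono {F F' : Finset (Finset α)} (hF : IsLaminar F) (h : F' ⊆ F) :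
    IsLaminar F' :=
  fun A hA B hB => hF A (h hA) B (h hB)

theorem IsLaminar.insert [DecidableEq α] {F : Finset (Finset α)} {A : Finset α}
    (hF : IsLaminar F) (hA : ∀ B ∈ F, A ⊆ B ∨ B ⊆ A ∨ Disjoint A B) :
    IsLaminar (insert A F) := by
  intro B hB C hC
  rcases Finset.mem_insert.1 hB with hBA | hB <;> rcases Finset.mem_insert.1 hC with hCA | hC
  · exact Or.inl (hBA.trans hCA.symm).subset
  · exact hBA ▸ hA C hC
  · rcases hCA ▸ hA B hB with h | h | h
    exacts [Or.inr (Or.inl h), Or.inl h, Or.inr (Or.inr h.symm)]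
  · exact hF B hB C hC

theorem IsLaminar.disjoint_of_maximal {F : Finset (Finset α)} {A M : Finset α}
    (hF : IsLaminar F) (hM : Maximal (· ∈ F) M) (hA : A ∈ F) (hAM : ¬A ⊆ M) :
    Disjoint A M := by
  rcases hF A hA M hM.1 with h | h | h
  exacts [absurd h hAM, absurd (hM.2 hA h) hAM, h]

theorem IsLaminar.card_le [DecidableEq α] {F : Finset (Finset α)} {s : Finset α}
    (hF : IsLaminar F) (hne : ∀ A ∈ F, A.Nonempty) (hs : ∀ A ∈ F, A ⊆ s) :
    F.card ≤ 2 * s.card - 1 := by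
  induction s using Finset.strongInduction generalizing F with
  | H s ih =>
  rcases F.eq_empty_or_nonempty with rfl | ⟨A, hA⟩
  · simp
  have hs_pos : 0 < s.card := card_pos.2 ((hne A hA).mono (hs A hA))
  set F' := F.erase s
  have hF' : IsLaminar F' := hF.mono (erase_subset _ _)
  have hF'F : ∀ {B}, B ∈ F' → B ∈ F := fun hB => mem_of_mem_erase hB
  -- Below a maximal member `M` of `F'` lies a laminar family on `M`; the rest lives in `s \ M`.
  have hcard' : F'.card ≤ 2 * s.card - 2 := by
    rcases F'.eq_empty_or_nonempty with h | hF'ne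
    · simp [h]
    obtain ⟨M, hM⟩ := F'.exists_maximal hF'ne
    have hMs : M ⊂ s := ssubset_of_subset_of_ne (hs M (hF'F hM.1)) (ne_of_mem_erase hM.1)
    have hMne : M.Nonempty := hne M (hF'F hM.1)
    have hbelow := ih M hMs (F := F'.filter (· ⊆ M)) (hF'.mono (filter_subset _ _))
      (fun B hB => hne B (hF'F (mem_filter.1 hB).1)) (fun B hB => (mem_filter.1 hB).2)
    have hrest := ih (s \ M) (sdiff_ssubset hMs.1 hMne) (F := F'.filter (¬ · ⊆ M))
      (hF'.mono (filter_subset _ _)) (fun B hB => hne B (hF'F (mem_filter.1 hB).1))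
      (fun B hB => subset_sdiff.2 ⟨hs B (hF'F (mem_filter.1 hB).1),
        hF'.disjoint_of_maximal hM (mem_filter.1 hB).1 (mem_filter.1 hB).2⟩)
    have := card_filter_add_card_filter_not (s := F') (· ⊆ M)
    have := card_sdiff_of_subset hMs.1
    have := card_lt_card hMs
    have := hMne.card_pos
    omega
  have : F.card - 1 ≤ F'.card := pred_card_le_card_erase
  have := card_pos.2 ⟨A, hA⟩
  omega

theorem exists_isLaminar_card_eq [DecidableEq α] (s : Finset α) :
    ∃ F : Finset (Finset α), IsLaminar F ∧ (∀ A ∈ F, A.Nonempty) ∧ (∀ A ∈ F, A ⊆ s) ∧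
      F.card = 2 * s.card - 1 := by
  rcases s.eq_empty_or_nonempty with rfl | hs
  · exact ⟨∅, by simp [IsLaminar]⟩
  induction hs using Finset.Nonempty.cons_induction with
  | singleton a => exact ⟨{{a}}, by simp [IsLaminar]⟩
  | cons a s has hs ih =>
    obtain ⟨F, hF, hne, hsub, hcard⟩ := ih
    refine ⟨insert (cons a s has) (insert {a} F), ?_, ?_, ?_, ?_⟩
    · refine (hF.insert fun B hB => Or.inr (Or.inr ?_)).insert fun B hB => Or.inr (Or.inl ?_)
      · exact disjoint_singleton_left.2 fun ha => has (hsub B hB ha)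
      · rcases mem_insert.1 hB with rfl | hB
        · simp
        · exact (hsub B hB).trans (subset_cons has)
    · simp only [mem_insert, forall_eq_or_imp]
      exact ⟨cons_nonempty has, singleton_nonempty a, hne⟩
    · simp only [mem_insert, forall_eq_or_imp]
      exact ⟨subset_rfl, by simp, fun B hB => (hsub B hB).trans (subset_cons has)⟩
    · have ha : {a} ∉ F := fun h => has (hsub _ h (mem_singleton_self a))
      have hs' : cons a s has ∉ insert {a} F := by
        simp only [mem_insert, not_or]
        refine ⟨fun h => ?_, fun h => has (hsub _ h (mem_cons_self a s))⟩
        have := congrArg card h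
        rw [card_cons, card_singleton] at this
        exact hs.card_pos.ne' (by omega)
      rw [card_insert_of_notMem hs', card_insert_of_notMem ha, hcard, card_cons]
      have := hs.card_pos
      omega

end Laminar

section Crosses

variable {α : Type*} [Fintype α] [DecidableEq α] {s t : Finset α}

def Crosses (s t : Finset α) : Prop :=
  ¬s ⊆ t ∧ ¬t ⊆ s ∧ ¬s ⊆ tᶜ ∧ ¬tᶜ ⊆ s

theorem Crosses.symm (h : Crosses s t) : Crosses t s := by
  obtain ⟨h₁, h₂, h₃, h₄⟩ := h
  exact ⟨h₂, h₁, subset_compl_comm.not.1 h₃, compl_le_iff_compl_le.not.1 h₄⟩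

theorem crosses_compl_left : Crosses sᶜ t ↔ Crosses s t := by
  simp only [Crosses, compl_subset_compl]
  rw [compl_le_iff_compl_le (x := s), subset_compl_comm (s := t)]
  tauto

theorem crosses_compl_right : Crosses s tᶜ ↔ Crosses s t :=
  ⟨fun h => (crosses_compl_left.1 h.symm).symm,
    fun h => (crosses_compl_left.2 h.symm).symm⟩

theorem not_crosses_iff_of_notMem {e : α} (hs : e ∉ s) (ht : e ∉ t) :
    ¬Crosses s t ↔ s ⊆ t ∨ t ⊆ s ∨ Disjoint s t := by
  have : ¬tᶜ ⊆ s := fun h => hs (h (mem_compl.2 ht))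
  simp only [Crosses, subset_compl_iff_disjoint_right]
  tauto

end Crosses

section InclusionGraph

variable {n : ℕ} {A B : SubVert n}

theorem SubVert.not_subset_compl (A : SubVert n) : ¬A.1 ⊆ A.1ᶜ :=
  fun h => A.2.1.ne_empty (le_compl_self.1 h)

theorem SubVert.not_compl_subset (A : SubVert n) : ¬A.1ᶜ ⊆ A.1 :=
  fun h => A.2.2 (compl_le_self.1 h)

theorem complVert_complVert (A : SubVert n) : complVert (complVert A) = A :=
  Subtype.ext (compl_compl A.1)

theorem ne_complVert (A : SubVert n) : A ≠ complVert A :=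
  fun h => A.not_subset_compl (congrArg Subtype.val h).subset

theorem inclGraph_exists_walk_of_comparable (h : A.1 ⊆ B.1 ∨ B.1 ⊆ A.1) :
    ∃ p : (inclGraph n).Walk A B, p.length ≤ 1 := by
  by_cases hAB : A = B
  · subst hAB; exact ⟨.nil, zero_le_one⟩
  have hne : A.1 ≠ B.1 := hAB ∘ Subtype.ext
  have hadj : (inclGraph n).Adj A B := by
    rcases h with h | h
    exacts [Or.inl (ssubset_of_subset_of_ne h hne), Or.inr (ssubset_of_subset_of_ne h hne.symm)]
  exact ⟨.cons hadj .nil, le_rfl⟩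

/-- The path goes through the meet or the join, one of which is a vertex. -/
theorem inclGraph_exists_walk_of_ne_compl (h : B.1 ≠ A.1ᶜ) :
    ∃ p : (inclGraph n).Walk A B, p.length ≤ 2 := by
  obtain ⟨C, hAC, hCB⟩ : ∃ C : SubVert n,
      (A.1 ⊆ C.1 ∨ C.1 ⊆ A.1) ∧ (C.1 ⊆ B.1 ∨ B.1 ⊆ C.1) := by
    by_cases hmeet : (A.1 ∩ B.1).Nonempty
    · have hmeet' : A.1 ∩ B.1 ≠ univ := fun hC =>
        A.2.2 (univ_subset_iff.1 (hC.symm.subset.trans inter_subset_left))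
      exact ⟨⟨A.1 ∩ B.1, hmeet, hmeet'⟩, Or.inr inter_subset_left, Or.inl inter_subset_right⟩
    · have hjoin : A.1 ∪ B.1 ≠ univ := fun hU =>
        h (IsCompl.of_eq (not_nonempty_iff_eq_empty.1 hmeet) hU).compl_eq.symm
      exact ⟨⟨A.1 ∪ B.1, A.2.1.mono subset_union_left, hjoin⟩,
        Or.inl subset_union_left, Or.inr subset_union_right⟩
  obtain ⟨p, hp⟩ := inclGraph_exists_walk_of_comparable hAC
  obtain ⟨q, hq⟩ := inclGraph_exists_walk_of_comparable hCB
  exact ⟨p.append q, by rw [Walk.length_append]; omega⟩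

theorem inclGraph_reachable_of_ne_compl (h : B.1 ≠ A.1ᶜ) : (inclGraph n).Reachable A B :=
  let ⟨p, _⟩ := inclGraph_exists_walk_of_ne_compl h; ⟨p⟩

theorem inclGraph_dist_le_two (h : B.1 ≠ A.1ᶜ) : (inclGraph n).dist A B ≤ 2 :=
  let ⟨p, hp⟩ := inclGraph_exists_walk_of_ne_compl h; (dist_le p).trans hp

theorem inclGraph_two_le_dist (hr : (inclGraph n).Reachable A B) (hAB : ¬A.1 ⊆ B.1)
    (hBA : ¬B.1 ⊆ A.1) : 2 ≤ (inclGraph n).dist A B :=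
  hr.one_lt_dist_of_ne_of_not_adj (fun h => hAB (h ▸ subset_rfl))
    (by rintro (h | h); exacts [hAB h.1, hBA h.1])

theorem inclGraph_three_le_dist_complVert (hr : (inclGraph n).Reachable A (complVert A)) :
    3 ≤ (inclGraph n).dist A (complVert A) := by
  have hnadj : ¬(inclGraph n).Adj A (complVert A) := by
    rintro (h | h)
    exacts [A.not_subset_compl h.1, A.not_compl_subset h.1]
  have hcommon : (inclGraph n).commonNeighbors A (complVert A) = ∅ := by
    refine Set.eq_empty_iff_forall_notMem.2 fun C hC => ?_
    obtain ⟨h₁ | h₁, h₂ | h₂⟩ := (mem_commonNeighbors _).1 hC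
    · exact C.not_compl_subset ((compl_subset_compl.2 h₁.1).trans h₂.1)
    · exact A.not_subset_compl (h₁.1.trans h₂.1)
    · exact A.not_compl_subset (h₂.1.trans h₁.1)
    · exact C.not_subset_compl (h₂.1.trans (compl_subset_compl.2 h₁.1))
  have := two_lt_edist_iff.2 ⟨ne_complVert A, hnadj, hcommon⟩
  rw [← hr.coe_dist_eq_edist] at this
  exact_mod_cast this

theorem dist_complVert_le_of_adj {w : SubVert n} (hw : (inclGraph n).Adj A w) :
    (inclGraph n).dist (complVert A) w ≤ (inclGraph n).dist A (complVert A) := by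
  have hwA : w.1 ≠ (complVert A).1ᶜ := by
    rw [show (complVert A).1ᶜ = A.1 from compl_compl A.1]
    exact fun h => (inclGraph n).ne_of_adj hw (Subtype.ext h).symm
  have hr : (inclGraph n).Reachable A (complVert A) :=
    hw.reachable.trans (inclGraph_reachable_of_ne_compl hwA).symm
  calc (inclGraph n).dist (complVert A) w ≤ 2 := inclGraph_dist_le_two hwA
    _ ≤ _ := inclGraph_two_le_dist hr A.not_subset_compl A.not_compl_subset

theorem mmd_complVert (A : SubVert n) : MMD (inclGraph n) A (complVert A) := by
  refine ⟨ne_complVert A, fun _ hw => dist_complVert_le_of_adj hw, fun w hw => ?_⟩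
  have := dist_complVert_le_of_adj (A := complVert A) hw
  rw [complVert_complVert] at this
  exact this.trans_eq dist_comm

theorem dist_le_of_crosses {w : SubVert n} (h : Crosses A.1 B.1) (hw : (inclGraph n).Adj A w) :
    (inclGraph n).dist B w ≤ (inclGraph n).dist A B := by
  have hwB : w.1 ≠ B.1ᶜ := by
    intro hwB
    rcases hw with hw | hw <;> rw [hwB] at hw
    exacts [h.2.2.1 hw.1, h.2.2.2 hw.1]
  have hBA : B.1 ≠ A.1ᶜ := fun hBA => h.2.2.2 (by rw [hBA, compl_compl])
  calc (inclGraph n).dist B w ≤ 2 := inclGraph_dist_le_two hwB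
    _ ≤ _ := inclGraph_two_le_dist (inclGraph_reachable_of_ne_compl hBA) h.1 h.2.1

theorem mmd_of_crosses (h : Crosses A.1 B.1) : MMD (inclGraph n) A B :=
  ⟨fun hAB => h.1 (hAB ▸ subset_rfl), fun _ hw => dist_le_of_crosses h hw,
    fun _ hw => (dist_le_of_crosses h.symm hw).trans_eq dist_comm⟩

/-- Removing from `B` a point of `A` gives a neighbour of `B` that is incomparable to `A`. -/
theorem not_mmd_of_ssubset (h : A.1 ⊂ B.1) : ¬MMD (inclGraph n) A B := by
  rintro ⟨-, -, hmax⟩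
  obtain ⟨a, ha⟩ := A.2.1
  obtain ⟨b, hbB, hbA⟩ := exists_of_ssubset h
  have hba : b ≠ a := fun hba => hbA (hba ▸ ha)
  let W : SubVert n := ⟨B.1.erase a, ⟨b, mem_erase.2 ⟨hba, hbB⟩⟩,
    fun hW => notMem_erase a B.1 (eq_univ_iff_forall.1 hW a)⟩
  have hBW : (inclGraph n).Adj B W := Or.inr (erase_ssubset (h.1 ha))
  have hAW : ¬A.1 ⊆ W.1 := fun hs => notMem_erase a B.1 (hs ha)
  have hWA : ¬W.1 ⊆ A.1 := fun hs => hbA (hs (mem_erase.2 ⟨hba, hbB⟩))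
  have hAB : (inclGraph n).Adj A B := Or.inl h
  have hle := hmax W hBW
  rw [dist_eq_one_iff_adj.2 hAB] at hle
  have := inclGraph_two_le_dist (hAB.reachable.trans hBW.reachable) hAW hWA
  omega

theorem not_mmd_of_adj_complVert (hc : B.1 ≠ A.1ᶜ) (h : (inclGraph n).Adj A (complVert B)) :
    ¬MMD (inclGraph n) A B := by
  rintro ⟨-, hmax, -⟩
  have hr : (inclGraph n).Reachable B (complVert B) :=
    (inclGraph_reachable_of_ne_compl hc).symm.trans h.reachable
  have := hmax _ h
  have := inclGraph_dist_le_two hc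
  have := inclGraph_three_le_dist_complVert hr
  omega

theorem strongResolvingGraph_inclGraph_adj_iff :
    (strongResolvingGraph (inclGraph n)).Adj A B ↔ B.1 = A.1ᶜ ∨ Crosses A.1 B.1 := by
  refine ⟨fun hAB => ?_, ?_⟩
  · by_contra! ⟨hc, hnc⟩
    have hne : A.1 ≠ B.1 := fun h => hAB.1 (Subtype.ext h)
    have hc' : A.1 ≠ B.1ᶜ := fun h => hc (by rw [h, compl_compl])
    simp only [Crosses, not_and_or, not_not] at hnc
    rcases hnc with h | h | h | h
    · exact not_mmd_of_ssubset (ssubset_of_subset_of_ne h hne) hAB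
    · exact not_mmd_of_ssubset (ssubset_of_subset_of_ne h hne.symm) hAB.symm
    · exact not_mmd_of_adj_complVert hc (Or.inl (ssubset_of_subset_of_ne h hc')) hAB
    · exact not_mmd_of_adj_complVert hc (Or.inr (ssubset_of_subset_of_ne h hc'.symm)) hAB
  · rintro (h | h)
    · obtain rfl : B = complVert A := Subtype.ext h
      exact mmd_complVert A
    · exact mmd_of_crosses h

end InclusionGraph

section IndependenceNumber

theorem indepNum_eq_of_forall_card_le {G : SimpleGraph V} {k : ℕ}
    (hex : ∃ S : Finset V, S.card = k ∧ IsIndepFinset G S)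
    (hle : ∀ S : Finset V, IsIndepFinset G S → S.card ≤ k) : _root_.indepNum G = k :=
  IsGreatest.csSup_eq ⟨hex, by rintro _ ⟨S, rfl, hS⟩; exact hle S hS⟩

variable {n : ℕ}

def SubVert.avoiding (e : Fin n) (A : SubVert n) : Finset (Fin n) :=
  if e ∈ A.1 then A.1ᶜ else A.1

theorem SubVert.notMem_avoiding (e : Fin n) (A : SubVert n) : e ∉ A.avoiding e := by
  unfold SubVert.avoiding
  split_ifs with h
  exacts [notMem_compl.2 h, h]

theorem SubVert.avoiding_nonempty (e : Fin n) (A : SubVert n) : (A.avoiding e).Nonempty := by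
  unfold SubVert.avoiding
  split_ifs
  exacts [(complVert A).2.1, A.2.1]

theorem SubVert.avoiding_eq_or (e : Fin n) (A : SubVert n) :
    A.avoiding e = A.1 ∨ A.avoiding e = A.1ᶜ := by
  unfold SubVert.avoiding
  split_ifs
  exacts [Or.inr rfl, Or.inl rfl]

theorem SubVert.crosses_avoiding_iff (e : Fin n) (A B : SubVert n) :
    Crosses (A.avoiding e) (B.avoiding e) ↔ Crosses A.1 B.1 := by
  rcases A.avoiding_eq_or e with hA | hA <;> rcases B.avoiding_eq_or e with hB | hB <;>
    simp only [hA, hB, crosses_compl_left, crosses_compl_right]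

theorem card_le_of_isIndepFinset (e : Fin n) {S : Finset (SubVert n)}
    (hS : IsIndepFinset (strongResolvingGraph (inclGraph n)) S) : S.card ≤ 2 * n - 3 := by
  have hS' : ∀ A ∈ S, ∀ B ∈ S, A ≠ B → B.1 ≠ A.1ᶜ ∧ ¬Crosses A.1 B.1 :=
    fun A hA B hB hAB => by
      simpa only [strongResolvingGraph_inclGraph_adj_iff, not_or] using hS A hA B hB hAB
  have hinj : Set.InjOn (SubVert.avoiding e) S := by
    intro A hA B hB h
    by_contra hAB
    rcases A.avoiding_eq_or e with hA' | hA' <;> rcases B.avoiding_eq_or e with hB' | hB' <;>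
      rw [hA', hB'] at h
    · exact hAB (Subtype.ext h)
    · exact (hS' B hB A hA (Ne.symm hAB)).1 h
    · exact (hS' A hA B hB hAB).1 h.symm
    · exact hAB (Subtype.ext (compl_injective h))
  have hlam : IsLaminar (S.image (SubVert.avoiding e)) := by
    simp only [IsLaminar, forall_mem_image]
    intro A hA B hB
    by_cases hAB : A = B
    · exact Or.inl (hAB ▸ subset_rfl)
    refine (not_crosses_iff_of_notMem (A.notMem_avoiding e) (B.notMem_avoiding e)).1 ?_
    exact (SubVert.crosses_avoiding_iff e A B).not.2 (hS' A hA B hB hAB).2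
  have := hlam.card_le (s := {e}ᶜ) (forall_mem_image.2 fun A _ => A.avoiding_nonempty e)
    (forall_mem_image.2 fun A _ => subset_compl_singleton.2 (A.notMem_avoiding e))
  rw [card_image_of_injOn hinj, card_compl, card_singleton, Fintype.card_fin] at this
  omega

theorem exists_isIndepFinset_card_eq (e : Fin n) :
    ∃ S : Finset (SubVert n), S.card = 2 * n - 3 ∧
      IsIndepFinset (strongResolvingGraph (inclGraph n)) S := by
  obtain ⟨F, hF, hne, hsub, hcard⟩ := exists_isLaminar_card_eq ({e}ᶜ : Finset (Fin n))
  have heF : ∀ A ∈ F, e ∉ A := fun A hA => subset_compl_singleton.1 (hsub A hA)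
  refine ⟨F.subtype fun A : Finset (Fin n) => A.Nonempty ∧ A ≠ univ, ?_, ?_⟩
  · refine (card_subtype _ _).trans ?_
    rw [filter_true_of_mem fun A hA => ⟨hne A hA, fun h => heF A hA (h ▸ mem_univ e)⟩, hcard,
      card_compl, card_singleton, Fintype.card_fin]
    omega
  · intro A hA B hB _
    replace hA : A.1 ∈ F := mem_subtype.1 hA
    replace hB : B.1 ∈ F := mem_subtype.1 hB
    rw [strongResolvingGraph_inclGraph_adj_iff, not_or,
      not_crosses_iff_of_notMem (heF _ hA) (heF _ hB)]
    exact ⟨fun h => heF _ hB (h ▸ mem_compl.2 (heF _ hA)), hF _ hA _ hB⟩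

end IndependenceNumber

theorem stmt11 (n : ℕ) (hn : 3 ≤ n) :
    _root_.indepNum (strongResolvingGraph (inclGraph n)) = 2 * n - 3 :=
  indepNum_eq_of_forall_card_le (exists_isIndepFinset_card_eq ⟨0, by omega⟩)
    fun _ => card_le_of_isIndepFinset ⟨0, by omega⟩
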